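/- arXiv:0808.3392 — 2 statements merged into one kernel-verified Lean document; each statement's English description precedes it below -/
import Mathlib

section
/- Let K be a commutative ring and A, B, d ∈ K. If the looped graph G is the union of two disjoint subgraphs G₁ and G₂ (i.e. its Boolean adjacency matrix is the block-diagonal sum of the Boolean adjacency matrices of G₁ and G₂), then [G](A,B,d) = [G₁](A,B,d) · [G₂](A,B,d). -/
/-!
A diagonal matrix on `V ⊕ W` is the block sum of a diagonal matrix on `V` and one on `W`, and
adding it to a block-diagonal matrix keeps that matrix block diagonal. Rank, hence nullity, is
additive on block-diagonal matrices, so each summand of `[G]` is the product of a summand of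
`[G₁]` and one of `[G₂]`, and the sum over pairs factors as a product of sums.
-/

open Matrix BigOperators

/-- The graph bracket polynomial of a looped graph specified by its Boolean
adjacency matrix `M` over `GF(2)`:
`[G](A,B,d) = ∑_Δ A^{ν(Δ)} B^{ρ(Δ)} d^{ν(M+Δ)}`, the sum over all diagonal
matrices `Δ` over `GF(2)` (encoded by their diagonal functions `f`). -/
noncomputable def gBracket {V : Type*} [Fintype V] [DecidableEq V] {K : Type*} [CommRing K]
    (M : Matrix V V (ZMod 2)) (A B d : K) : K :=
  ∑ f : V → ZMod 2,
    A ^ (Fintype.card V - (Matrix.diagonal f).rank)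
      * B ^ (Matrix.diagonal f).rank
      * d ^ (Fintype.card V - (M + Matrix.diagonal f).rank)

def Submodule.prodEquiv {R M N : Type*} [Semiring R] [AddCommMonoid M] [AddCommMonoid N]
    [Module R M] [Module R N] (p : Submodule R M) (q : Submodule R N) :
    p.prod q ≃ₗ[R] p × q where
  toFun x := (⟨x.1.1, x.2.1⟩, ⟨x.1.2, x.2.2⟩)
  invFun x := ⟨(x.1.1, x.2.1), ⟨x.1.2, x.2.2⟩⟩
  left_inv _ := rfl
  right_inv _ := rfl
  map_add' _ _ := rfl
  map_smul' _ _ := rfl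

theorem Submodule.finrank_prod {R M N : Type*} [Ring R] [StrongRankCondition R]
    [AddCommGroup M] [AddCommGroup N] [Module R M] [Module R N]
    (p : Submodule R M) (q : Submodule R N) [Module.Free R p] [Module.Free R q]
    [Module.Finite R p] [Module.Finite R q] :
    Module.finrank R (p.prod q) = Module.finrank R p + Module.finrank R q := by
  rw [(p.prodEquiv q).finrank_eq, Module.finrank_prod]

section BlockDiagonal

variable {V W F : Type*} [Fintype V] [Fintype W] [Field F]

theorem Matrix.mulVecLin_fromBlocks_zero (P : Matrix V V F) (Q : Matrix W W F) :
    (fromBlocks P 0 0 Q).mulVecLin =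
      (LinearEquiv.sumArrowLequivProdArrow V W F F).symm.toLinearMap ∘ₗ
        (P.mulVecLin.prodMap Q.mulVecLin) ∘ₗ
          (LinearEquiv.sumArrowLequivProdArrow V W F F).toLinearMap := by
  refine LinearMap.ext fun v => funext fun i => ?_
  cases i <;>
    simp [fromBlocks_mulVec, LinearEquiv.sumArrowLequivProdArrow, Equiv.sumArrowEquivProdArrow]

theorem Matrix.rank_fromBlocks_zero (P : Matrix V V F) (Q : Matrix W W F) :
    (fromBlocks P 0 0 Q).rank = P.rank + Q.rank := by
  rw [Matrix.rank, mulVecLin_fromBlocks_zero, LinearMap.range_comp, LinearMap.range_comp,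
    LinearEquiv.range, Submodule.map_top, LinearMap.range_prodMap, LinearEquiv.finrank_map_eq,
    Submodule.finrank_prod]
  rfl

theorem Matrix.card_sub_rank_fromBlocks_zero (P : Matrix V V F) (Q : Matrix W W F) :
    Fintype.card (V ⊕ W) - (fromBlocks P 0 0 Q).rank =
      (Fintype.card V - P.rank) + (Fintype.card W - Q.rank) := by
  have hP : P.rank ≤ Fintype.card V := P.rank_le_card_width
  have hQ : Q.rank ≤ Fintype.card W := Q.rank_le_card_width
  rw [rank_fromBlocks_zero, Fintype.card_sum]
  omega

end BlockDiagonal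

section Bracket

variable {V W K : Type*} [Fintype V] [Fintype W] [DecidableEq V] [DecidableEq W] [CommRing K]

noncomputable def gBracketTerm (M : Matrix V V (ZMod 2)) (A B d : K) (f : V → ZMod 2) : K :=
  A ^ (Fintype.card V - (diagonal f).rank) * B ^ (diagonal f).rank
    * d ^ (Fintype.card V - (M + diagonal f).rank)

theorem gBracket_eq_sum_gBracketTerm (M : Matrix V V (ZMod 2)) (A B d : K) :
    gBracket M A B d = ∑ f, gBracketTerm M A B d f :=
  rfl

theorem gBracketTerm_fromBlocks_zero (M₁ : Matrix V V (ZMod 2)) (M₂ : Matrix W W (ZMod 2))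
    (A B d : K) (f₁ : V → ZMod 2) (f₂ : W → ZMod 2) :
    gBracketTerm (fromBlocks M₁ 0 0 M₂) A B d (Sum.elim f₁ f₂) =
      gBracketTerm M₁ A B d f₁ * gBracketTerm M₂ A B d f₂ := by
  have hdiag : diagonal (Sum.elim f₁ f₂) = fromBlocks (diagonal f₁) 0 0 (diagonal f₂) :=
    (fromBlocks_diagonal f₁ f₂).symm
  have hsum : fromBlocks M₁ 0 0 M₂ + diagonal (Sum.elim f₁ f₂) =
      fromBlocks (M₁ + diagonal f₁) 0 0 (M₂ + diagonal f₂) := by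
    simp only [hdiag, fromBlocks_add, add_zero]
  rw [gBracketTerm, hsum, hdiag, card_sub_rank_fromBlocks_zero, card_sub_rank_fromBlocks_zero,
    rank_fromBlocks_zero, gBracketTerm, gBracketTerm, pow_add, pow_add, pow_add]
  ring

theorem gBracket_fromBlocks_zero (M₁ : Matrix V V (ZMod 2)) (M₂ : Matrix W W (ZMod 2))
    (A B d : K) :
    gBracket (fromBlocks M₁ 0 0 M₂) A B d = gBracket M₁ A B d * gBracket M₂ A B d := by
  rw [gBracket_eq_sum_gBracketTerm, gBracket_eq_sum_gBracketTerm, gBracket_eq_sum_gBracketTerm,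
    Finset.sum_mul_sum, ← (Equiv.sumArrowEquivProdArrow V W (ZMod 2)).symm.sum_comp,
    Fintype.sum_prod_type]
  exact Fintype.sum_congr _ _ fun f₁ => Fintype.sum_congr _ _ fun f₂ =>
    gBracketTerm_fromBlocks_zero M₁ M₂ A B d f₁ f₂

end Bracket

theorem graphBracket_disjoint_union_general {K : Type*} [CommRing K] (A B d : K)
    {n m : ℕ} (M₁ : Matrix (Fin n) (Fin n) (ZMod 2))
    (M₂ : Matrix (Fin m) (Fin m) (ZMod 2)) :
    gBracket (Matrix.fromBlocks M₁ 0 0 M₂) A B d =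
      gBracket M₁ A B d * gBracket M₂ A B d :=
  gBracket_fromBlocks_zero M₁ M₂ A B d

/-- Proposition 1: the graph bracket is multiplicative over disjoint unions:
if `G` is the disjoint union of `G₁` and `G₂` then `[G] = [G₁]·[G₂]`. -/
theorem graphBracket_disjoint_union {K : Type*} [CommRing K] (A B d : K)
    {n m : ℕ} (M₁ : Matrix (Fin n) (Fin n) (ZMod 2)) (hsym₁ : M₁.IsSymm)
    (M₂ : Matrix (Fin m) (Fin m) (ZMod 2)) (hsym₂ : M₂.IsSymm) :
    gBracket (Matrix.fromBlocks M₁ 0 0 M₂) A B d =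
      gBracket M₁ A B d * gBracket M₂ A B d :=
  graphBracket_disjoint_union_general A B d M₁ M₂
end

section
/- For every looped graph G on n vertices, the reduced graph bracket satisfies ⟨G⟩(1) = (−1)^n; equivalently, ∑_Δ (−2)^{ν(M+Δ)} = (−1)^n, where the sum ranges over all 2^n diagonal n×n matrices Δ over GF(2). (This is the identity underlying V_G(1) = 1.) -/
open Matrix BigOperators

/-- The reduced graph bracket `⟨G⟩(A) = [G](A, A⁻¹, -A² - A⁻²)`. -/
noncomputable def gBracketR {V : Type*} [Fintype V] [DecidableEq V]
    (M : Matrix V V (ZMod 2)) (A : ℝ) : ℝ :=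
  gBracket M A A⁻¹ (-A ^ 2 - A⁻¹ ^ 2)

/-!
Write `ν` for the nullity over `GF(2)`, and border a symmetric matrix `A` by a column `b` and a
corner entry `c`. If `b = A x`, then `ν` grows by one for the corner value `c = b ⬝ x` and is
unchanged for the other value; if `b` is not in the range of `A`, then, since the range of a
symmetric matrix is the orthogonal of its kernel, `ν` drops by one for both values. Either way
`∑_c (-2)^ν(border A b c) = -(-2)^ν(A)`. Summing over the loop bit of the last vertex therefore
multiplies `∑_Δ (-2)^ν(M + Δ)` by `-1`, and induction on `n` gives `(-1)^n`. At `A = 1` the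
reduced bracket is exactly this sum, as `d = -2` there.
-/

theorem ZMod.sum_univ_two {M : Type*} [AddCommMonoid M] (g : ZMod 2 → M) :
    ∑ t, g t = g 0 + g 1 :=
  Fin.sum_univ_two g

theorem Nat.card_subtype_eq_sum_card_fiber {α β : Type*} [Finite α] [Fintype β]
    (p : α → Prop) (g : α → β) :
    Nat.card {x // p x} = ∑ y, Nat.card {x // p x ∧ g x = y} := by
  let e : (Σ y, {x // p x ∧ g x = y}) ≃ {x // p x} :=
    { toFun := fun ⟨_, x, hx, _⟩ => ⟨x, hx⟩
      invFun := fun x => ⟨g x, x, x.2, rfl⟩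
      left_inv := by rintro ⟨_, x, hx, rfl⟩; rfl
      right_inv := fun _ => rfl }
  rw [← Nat.card_congr e, Nat.card_sigma]

def Equiv.sumUnitArrow (m R : Type*) : R × (m → R) ≃ (m ⊕ Unit → R) where
  toFun p := Sum.elim p.2 fun _ => p.1
  invFun v := (v (.inr ()), v ∘ .inl)
  left_inv _ := rfl
  right_inv _ := funext fun | .inl _ => rfl | .inr () => rfl

namespace Matrix

section Symmetric

variable {R m : Type*} [CommRing R] [Fintype m] {A : Matrix m m R} {b x z : m → R}

theorem IsSymm.dotProduct_eq_zero_of_mulVec_eq (hA : A.IsSymm) (hx : A *ᵥ x = b)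
    (hz : A *ᵥ z = 0) : b ⬝ᵥ z = 0 := by
  rw [← hx, dotProduct_comm, dotProduct_mulVec, ← mulVec_transpose, hA, hz, zero_dotProduct]

/-- The solutions of `A z = b` are the translates of the kernel by `x`, and by symmetry `b ⬝ᵥ ·`
is constant on them. -/
theorem IsSymm.natCard_mulVec_eq_and_dotProduct_eq (hA : A.IsSymm) (hx : A *ᵥ x = b) (c : R) :
    Nat.card {z // A *ᵥ z = b ∧ b ⬝ᵥ z = c} = Nat.card {k // A *ᵥ k = 0 ∧ b ⬝ᵥ x = c} := by
  refine Nat.card_congr (Equiv.subtypeEquiv (Equiv.subRight x) fun z => ?_)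
  have hsub : A *ᵥ (z - x) = 0 ↔ A *ᵥ z = b := by rw [mulVec_sub, hx, sub_eq_zero]
  simp only [Equiv.subRight_apply, hsub, and_congr_right_iff]
  intro hz
  rw [← add_sub_cancel x z, dotProduct_add, hA.dotProduct_eq_zero_of_mulVec_eq hx (hsub.2 hz),
    add_zero]

end Symmetric

section Nullity

variable {K m n m' n' : Type*} [Field K] [Fintype n]

noncomputable def nullity (A : Matrix m n K) : ℕ :=
  Module.finrank K (LinearMap.ker A.mulVecLin)

theorem rank_add_nullity (A : Matrix m n K) : A.rank + A.nullity = Fintype.card n := by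
  rw [rank, nullity, LinearMap.finrank_range_add_finrank_ker, Module.finrank_fintype_fun_eq_card]

theorem nullity_eq_card_sub_rank (A : Matrix m n K) : A.nullity = Fintype.card n - A.rank := by
  have := rank_add_nullity A
  omega

theorem nullity_reindex [Fintype n'] (e : m ≃ m') (e' : n ≃ n') (A : Matrix m n K) :
    (reindex e e' A).nullity = A.nullity := by
  have h := rank_add_nullity A
  rw [← rank_reindex e e', Fintype.card_congr e', ← rank_add_nullity (reindex e e' A)] at h
  omega

theorem natCard_ker_eq_pow_nullity [Finite K] (A : Matrix m n K) :
    Nat.card {v // A *ᵥ v = 0} = Nat.card K ^ A.nullity := by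
  rw [nullity, ← Module.natCard_eq_pow_finrank]
  exact Nat.card_congr <| Equiv.subtypeEquivRight fun _ => by
    rw [LinearMap.mem_ker, mulVecLin_apply]

theorem exists_vecMul_eq_of_dotProduct_eq_zero [Fintype m] {A : Matrix m n K} {b : n → K}
    (h : ∀ z, A *ᵥ z = 0 → b ⬝ᵥ z = 0) : ∃ y, y ᵥ* A = b := by
  classical
  have hb : dotProductEquiv K n b ∈ LinearMap.range A.mulVecLin.dualMap := by
    rw [LinearMap.range_dualMap_eq_dualAnnihilator_ker, Submodule.mem_dualAnnihilator]
    exact h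
  obtain ⟨φ, hφ⟩ := hb
  obtain ⟨y, rfl⟩ := (dotProductEquiv K m).surjective φ
  refine ⟨y, (dotProductEquiv K n).injective (LinearMap.ext fun z => ?_)⟩
  rw [← hφ]
  simp [dotProduct_mulVec]

theorem IsSymm.exists_mulVec_eq_iff {A : Matrix n n K} {b : n → K} (hA : A.IsSymm) :
    (∃ x, A *ᵥ x = b) ↔ ∀ z, A *ᵥ z = 0 → b ⬝ᵥ z = 0 := by
  refine ⟨fun ⟨x, hx⟩ z hz => hA.dotProduct_eq_zero_of_mulVec_eq hx hz, fun h => ?_⟩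
  obtain ⟨y, hy⟩ := exists_vecMul_eq_of_dotProduct_eq_zero h
  exact ⟨y, by rw [← hy, ← mulVec_transpose, hA]⟩

end Nullity

section Border

variable {R m : Type*}

def border [Zero R] (A : Matrix m m R) (b : m → R) (c : R) : Matrix (m ⊕ Unit) (m ⊕ Unit) R :=
  fromBlocks A (replicateCol Unit b) (replicateRow Unit b) (of fun _ _ => c)

theorem IsSymm.exists_eq_border [Zero R] {N : Matrix (m ⊕ Unit) (m ⊕ Unit) R} (hN : N.IsSymm) :
    ∃ A b c, A.IsSymm ∧ N = border A b c := by
  refine ⟨N.toBlocks₁₁, fun i => N (.inl i) (.inr ()), N (.inr ()) (.inr ()),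
    IsSymm.ext fun i j => hN.apply (.inl i) (.inl j), ?_⟩
  ext (i | i) (j | j)
  · rfl
  · rfl
  · exact (hN.apply _ _).symm
  · rfl

theorem border_add_diagonal [AddZeroClass R] [DecidableEq m] (A : Matrix m m R) (b : m → R)
    (c : R) (d : m → R) (t : R) :
    border A b c + diagonal (Sum.elim d fun _ => t) = border (A + diagonal d) b (c + t) := by
  ext (i | i) (j | j) <;> simp [border, diagonal, fromBlocks]

theorem border_mulVec_sumElim [CommRing R] [Fintype m] (A : Matrix m m R) (b : m → R)
    (c : R) (z : m → R) (t : R) :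
    border A b c *ᵥ Sum.elim z (fun _ => t) =
      Sum.elim (A *ᵥ z + t • b) (fun _ => b ⬝ᵥ z + c * t) := by
  ext (i | i) <;> simp [border, mulVec, dotProduct, mul_comm]

end Border

section GF2

variable {m : Type*} [Fintype m] {A : Matrix m m (ZMod 2)} {b : m → ZMod 2}

/-- In characteristic two, `(z, t)` lies in the kernel iff `A z = t b` and `b ⬝ᵥ z = c t`. -/
theorem natCard_ker_border (A : Matrix m m (ZMod 2)) (b : m → ZMod 2) (c : ZMod 2) :
    Nat.card {v // border A b c *ᵥ v = 0} =
      Nat.card {z // A *ᵥ z = 0 ∧ b ⬝ᵥ z = 0} + Nat.card {z // A *ᵥ z = b ∧ b ⬝ᵥ z = c} := by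
  let e := Equiv.sumUnitArrow m (ZMod 2)
  have hker : ∀ t z, border A b c *ᵥ e (t, z) = 0 ↔ A *ᵥ z = t • b ∧ b ⬝ᵥ z = c * t := by
    intro t z
    change border A b c *ᵥ Sum.elim z (fun _ => t) = 0 ↔ _
    rw [border_mulVec_sumElim, funext_iff, Sum.forall, funext_iff]
    simp only [Sum.elim_inl, Sum.elim_inr, Pi.zero_apply, Pi.add_apply, CharTwo.add_eq_zero,
      forall_const]
  rw [← Nat.card_congr (e.subtypeEquiv fun _ => Iff.rfl),
    Nat.card_congr (Equiv.subtypeProdEquivSigmaSubtype fun t z => border A b c *ᵥ e (t, z) = 0),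
    Nat.card_sigma, ZMod.sum_univ_two]
  simp only [hker, zero_smul, one_smul, mul_zero, mul_one]

theorem IsSymm.two_mul_natCard_ker_and_dotProduct_eq_zero (hA : A.IsSymm) (hb : ¬∃ x, A *ᵥ x = b) :
    2 * Nat.card {z // A *ᵥ z = 0 ∧ b ⬝ᵥ z = 0} = Nat.card {z // A *ᵥ z = 0} := by
  obtain ⟨z₁, hz₁, hbz₁⟩ : ∃ z₁, A *ᵥ z₁ = 0 ∧ b ⬝ᵥ z₁ = 1 := by
    simp only [hA.exists_mulVec_eq_iff, not_forall] at hb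
    obtain ⟨z₁, hz₁, hbz₁⟩ := hb
    exact ⟨z₁, hz₁, Fin.eq_one_of_ne_zero _ hbz₁⟩
  have hshift : Nat.card {z // A *ᵥ z = 0 ∧ b ⬝ᵥ z = 0} =
      Nat.card {z // A *ᵥ z = 0 ∧ b ⬝ᵥ z = 1} :=
    Nat.card_congr <| Equiv.subtypeEquiv (Equiv.addRight z₁) fun z => by
      simp [mulVec_add, dotProduct_add, hz₁, hbz₁]
  rw [Nat.card_subtype_eq_sum_card_fiber (fun z => A *ᵥ z = 0) (b ⬝ᵥ ·), ZMod.sum_univ_two,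
    ← hshift, two_mul]

theorem IsSymm.nullity_border_of_mulVec_eq (hA : A.IsSymm) {x : m → ZMod 2} (hx : A *ᵥ x = b)
    (c : ZMod 2) :
    (border A b c).nullity = if b ⬝ᵥ x = c then A.nullity + 1 else A.nullity := by
  refine Nat.pow_right_injective (le_refl 2) (?_ : 2 ^ _ = 2 ^ _)
  have hker : Nat.card {z // A *ᵥ z = 0 ∧ b ⬝ᵥ z = 0} = Nat.card {z // A *ᵥ z = 0} :=
    Nat.card_congr <| Equiv.subtypeEquivRight fun _ =>
      and_iff_left_of_imp (hA.dotProduct_eq_zero_of_mulVec_eq hx)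
  have h := natCard_ker_border A b c
  rw [hker, hA.natCard_mulVec_eq_and_dotProduct_eq hx] at h
  simp only [natCard_ker_eq_pow_nullity, Nat.card_zmod] at h
  split_ifs at h ⊢ with hc
  · simp only [h, hc, and_true, natCard_ker_eq_pow_nullity, Nat.card_zmod, pow_succ, mul_two]
  · simp [h, hc]

theorem IsSymm.nullity_border_add_one (hA : A.IsSymm) (hb : ¬∃ x, A *ᵥ x = b) (c : ZMod 2) :
    (border A b c).nullity + 1 = A.nullity := by
  refine Nat.pow_right_injective (le_refl 2) (?_ : 2 ^ _ = 2 ^ _)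
  have hempty : Nat.card {z // A *ᵥ z = b ∧ b ⬝ᵥ z = c} = 0 :=
    @Nat.card_of_isEmpty _ ⟨fun z => hb ⟨z, z.2.1⟩⟩
  have h := natCard_ker_border A b c
  rw [hempty, add_zero] at h
  have h2 := hA.two_mul_natCard_ker_and_dotProduct_eq_zero hb
  rw [← h, natCard_ker_eq_pow_nullity, natCard_ker_eq_pow_nullity, Nat.card_zmod] at h2
  rw [pow_succ, mul_comm, h2]

theorem IsSymm.sum_neg_two_pow_nullity_border {S : Type*} [CommRing S] (hA : A.IsSymm)
    (b : m → ZMod 2) :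
    ∑ c, (-2 : S) ^ (border A b c).nullity = -(-2) ^ A.nullity := by
  rw [ZMod.sum_univ_two]
  by_cases hb : ∃ x, A *ᵥ x = b
  · obtain ⟨x, hx⟩ := hb
    simp only [hA.nullity_border_of_mulVec_eq hx]
    obtain h | h : b ⬝ᵥ x = 0 ∨ b ⬝ᵥ x = 1 := by generalize b ⬝ᵥ x = s; decide +revert
    all_goals simp [h, pow_succ]; ring
  · have h := hA.nullity_border_add_one hb
    have h01 : (border A b 1).nullity = (border A b 0).nullity := by
      have := h 0
      have := h 1
      omega
    rw [← h 0, h01, pow_succ]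
    ring

theorem IsSymm.sum_neg_two_pow_nullity_add_diagonal {S : Type*} [CommRing S] :
    ∀ {n : ℕ} {M : Matrix (Fin n) (Fin n) (ZMod 2)}, M.IsSymm →
      ∑ f, (-2 : S) ^ (M + diagonal f).nullity = (-1) ^ n
  | 0, M, _ => by simp [nullity, Module.finrank_zero_of_subsingleton]
  | n + 1, M, hM => by
    let e : Fin (n + 1) ≃ Fin n ⊕ Unit := Fintype.equivOfCardEq (by simp)
    obtain ⟨A, b, c, hA, hN⟩ := (hM.submatrix e.symm).exists_eq_border
    calc ∑ f, (-2 : S) ^ (M + diagonal f).nullity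
        = ∑ f, (-2 : S) ^ (M.submatrix e.symm e.symm + diagonal f).nullity := by
          refine Fintype.sum_equiv (e.arrowCongr (Equiv.refl _)) _ _ fun f => ?_
          rw [← nullity_reindex e e (M + diagonal f)]
          simp only [reindex_apply, submatrix_add, Pi.add_apply, submatrix_diagonal_equiv]
          rfl
      _ = ∑ d, ∑ t, (-2 : S) ^ (border (A + diagonal d) b (c + t)).nullity := by
          rw [← (Equiv.sumUnitArrow _ _).sum_comp, Fintype.sum_prod_type_right, hN]
          simp only [← border_add_diagonal]
          rfl
      _ = ∑ d, -(-2 : S) ^ (A + diagonal d).nullity := Fintype.sum_congr _ _ fun d =>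
          (Equiv.sum_comp (Equiv.addLeft c) _).trans
            ((hA.add (isSymm_diagonal d)).sum_neg_two_pow_nullity_border b)
      _ = (-1) ^ (n + 1) := by
          rw [Finset.sum_neg_distrib, hA.sum_neg_two_pow_nullity_add_diagonal, pow_succ,
            mul_neg_one]

end GF2

end Matrix

/-- The reduced graph bracket satisfies `⟨G⟩(1) = (-1)^n`; equivalently,
`∑_Δ (-2)^{ν(M+Δ)} = (-1)^n`.  (This underlies `V_G(1) = 1`.) -/
theorem reducedBracket_at_one {n : ℕ} (M : Matrix (Fin n) (Fin n) (ZMod 2))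
    (hsym : M.IsSymm) :
    gBracketR M 1 = (-1 : ℝ) ^ n ∧
    ∑ f : Fin n → ZMod 2,
        (-2 : ℝ) ^ (n - (M + Matrix.diagonal f).rank) = (-1 : ℝ) ^ n := by
  have hsum : ∑ f : Fin n → ZMod 2, (-2 : ℝ) ^ (n - (M + diagonal f).rank) = (-1) ^ n := by
    simpa only [nullity_eq_card_sub_rank, Fintype.card_fin] using
      hsym.sum_neg_two_pow_nullity_add_diagonal
  refine ⟨?_, hsum⟩
  rw [← hsum, gBracketR, gBracket]
  norm_num
end
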